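/- Let r ≥ 4 and let G be any spanning subgraph of the complete bipartite graph K_{2,r} on 2 + r vertices. Then χ_gb(G) ≤ 2 + ⌊(2+r)/2⌋ − 2 = ⌊(2+r)/2⌋. -/

import Mathlib

open Function

namespace GameCol

variable {V : Type*} [Fintype V] [DecidableEq V]

/-- A finite set of vertices is independent in `G`. -/
def IsIndepF (G : SimpleGraph V) (s : Finset V) : Prop :=
  ∀ u ∈ s, ∀ v ∈ s, ¬ G.Adj u v

/-! ### The vertex colouring game.

A position is a partial proper colouring `f : V → Option ℕ` (`none` = uncoloured);
the palette consists of the `k` colours `0, …, k-1`.  The `Bool` records whose turn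
it is (`true` = Maker).  Players alternate, Maker moving first, always making a legal
move if one exists; the game ends when the player to move has no legal move, and
Maker wins if and only if the whole graph is then coloured. -/

/-- Colour `c` may legally be played at `v`. -/
def ColLegal (G : SimpleGraph V) (k : ℕ) (f : V → Option ℕ) (v : V) (c : ℕ) : Prop :=
  c < k ∧ f v = none ∧ ∀ u, G.Adj v u → f u ≠ some c

/-- Every vertex is coloured. -/
def FullC (f : V → Option ℕ) : Prop := ∀ v, f v ≠ none

/-- Maker wins the vertex colouring game from the given position with optimal play
(`fuel` is an upper bound on the number of remaining moves). -/
def MakerWinsC (G : SimpleGraph V) (k : ℕ) : ℕ → (V → Option ℕ) → Bool → Prop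
  | 0, f, _ => FullC f
  | fuel + 1, f, true => FullC f ∨
      ∃ v c, ColLegal G k f v c ∧ MakerWinsC G k fuel (update f v (some c)) false
  | fuel + 1, f, false => FullC f ∨
      ((∃ v c, ColLegal G k f v c) ∧
        ∀ v c, ColLegal G k f v c → MakerWinsC G k fuel (update f v (some c)) true)

/-- The game chromatic number `χ_g(G)`: the least number of colours for which Maker
has a winning strategy in the vertex colouring game. -/
noncomputable def gameChromaticNumber (G : SimpleGraph V) : ℕ :=
  sInf {k | MakerWinsC G k (Fintype.card V) (fun _ => none) true}

/-! ### The vertex colouring game with blanks.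

Positions are `f : V → Option (Option ℕ)`: `none` = unplayed, `some none` = blank,
`some (some c)` = coloured with colour `c`.  The palette is a finite set `K ⊆ ℕ` of
colours.  On her turn Maker must play a colour; on his turn Breaker may play a colour,
or a blank at any unplayed vertex.  The game ends as soon as no vertex can legally
receive a colour, and Maker wins iff every vertex is then coloured or blank. -/

/-- Colour `c` may legally be played at `v` (blanks put no restriction on their
neighbours). -/
def BColLegal (G : SimpleGraph V) (K : Finset ℕ) (f : V → Option (Option ℕ))
    (v : V) (c : ℕ) : Prop :=
  c ∈ K ∧ f v = none ∧ ∀ u, G.Adj v u → f u ≠ some (some c)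

/-- Every vertex is coloured or blank. -/
def AllPlayed (f : V → Option (Option ℕ)) : Prop := ∀ v, f v ≠ none

/-- Maker wins the vertex colouring game with blanks from the given position. -/
def MakerWinsB (G : SimpleGraph V) (K : Finset ℕ) :
    ℕ → (V → Option (Option ℕ)) → Bool → Prop
  | 0, f, _ => AllPlayed f
  | fuel + 1, f, true => AllPlayed f ∨
      ∃ v c, BColLegal G K f v c ∧ MakerWinsB G K fuel (update f v (some (some c))) false
  | fuel + 1, f, false =>
      ((¬ ∃ v c, BColLegal G K f v c) ∧ AllPlayed f) ∨
      ((∃ v c, BColLegal G K f v c) ∧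
        (∀ v c, BColLegal G K f v c →
          MakerWinsB G K fuel (update f v (some (some c))) true) ∧
        (∀ v, f v = none → MakerWinsB G K fuel (update f v (some none)) true))

/-- The game chromatic number with blanks `χ_gb(G)`: the least number of colours for
which Maker has a winning strategy in the vertex colouring game with blanks. -/
noncomputable def chiGb (G : SimpleGraph V) : ℕ :=
  sInf {k | MakerWinsB G (Finset.range k) (Fintype.card V) (fun _ => none) true}

/-! ### The game with blanks, with classes marked for blanks.

The extra datum is the finite set `ds` of currently marked classes.  Maker may also
play blanks at unplayed vertices of marked classes; the game does not end while some
vertex of a marked class is unplayed; and whenever Breaker plays a blank at `v` he may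
additionally remove one marked class not containing `v`. -/

/-- `v` belongs to some class marked for blanks. -/
def InMarked (ds : Finset (Finset V)) (v : V) : Prop := ∃ d ∈ ds, v ∈ d

/-- The game has ended: no colour move is available and no vertex of a class marked
for blanks is left unplayed. -/
def MEnded (G : SimpleGraph V) (K : Finset ℕ) (f : V → Option (Option ℕ))
    (ds : Finset (Finset V)) : Prop :=
  (¬ ∃ v c, BColLegal G K f v c) ∧ ∀ v, InMarked ds v → f v ≠ none

/-- Maker wins the vertex colouring game with blanks, with the classes `ds` marked
for blanks, from the given position. -/
def MakerWinsM (G : SimpleGraph V) (K : Finset ℕ) :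
    ℕ → (V → Option (Option ℕ)) → Finset (Finset V) → Bool → Prop
  | 0, f, _, _ => AllPlayed f
  | fuel + 1, f, ds, true =>
      (MEnded G K f ds ∧ AllPlayed f) ∨
      (¬ MEnded G K f ds ∧
        ((∃ v c, BColLegal G K f v c ∧
            MakerWinsM G K fuel (update f v (some (some c))) ds false) ∨
         (∃ v, f v = none ∧ InMarked ds v ∧
            MakerWinsM G K fuel (update f v (some none)) ds false)))
  | fuel + 1, f, ds, false =>
      (MEnded G K f ds ∧ AllPlayed f) ∨
      (¬ MEnded G K f ds ∧
        (∀ v c, BColLegal G K f v c →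
          MakerWinsM G K fuel (update f v (some (some c))) ds true) ∧
        (∀ v, f v = none →
          MakerWinsM G K fuel (update f v (some none)) ds true ∧
          ∀ d ∈ ds, v ∉ d →
            MakerWinsM G K fuel (update f v (some none)) (ds.erase d) true))

/-- `χ_gb(G; D₁,…,Dₛ)`: the least number of colours for which Maker has a winning
strategy in the vertex colouring game with blanks with the classes in `ds` marked for
blanks. -/
noncomputable def chiGbM (G : SimpleGraph V) (ds : Finset (Finset V)) : ℕ :=
  sInf {k | MakerWinsM G (Finset.range k) (Fintype.card V) (fun _ => none) ds true}

/-! ### Move sequences, for conditioning the game on an initial sequence of plays. -/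

/-- A move in the game with blanks: a colour at a vertex, or a blank at a vertex
together with an optional marked class which Breaker removes. -/
inductive BMove (W : Type*) where
  | color (v : W) (c : ℕ)
  | blank (v : W) (removed : Option (Finset W))
  deriving DecidableEq

/-- The vertex at which a move is made. -/
def BMove.vertex {W : Type*} : BMove W → W
  | .color v _ => v
  | .blank v _ => v

/-- The effect of a single move on a position. -/
def bStep (st : (V → Option (Option ℕ)) × Finset (Finset V)) :
    BMove V → (V → Option (Option ℕ)) × Finset (Finset V)
  | .color v c => (update st.1 v (some (some c)), st.2)
  | .blank v none => (update st.1 v (some none), st.2)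
  | .blank v (some d) => (update st.1 v (some none), st.2.erase d)

/-- The position reached after the sequence `P` of moves. -/
def bRun (st : (V → Option (Option ℕ)) × Finset (Finset V)) (P : List (BMove V)) :
    (V → Option (Option ℕ)) × Finset (Finset V) :=
  P.foldl bStep st

/-- `P` is a legal sequence of moves from the given position in the game with blanks
with marked classes (the `Bool` is the player to move, `true` = Maker). -/
def LegalSeqM (G : SimpleGraph V) (K : Finset ℕ) :
    (V → Option (Option ℕ)) → Finset (Finset V) → Bool → List (BMove V) → Prop
  | _, _, _, [] => True
  | f, ds, true, BMove.color v c :: rest =>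
      ¬ MEnded G K f ds ∧ BColLegal G K f v c ∧
        LegalSeqM G K (update f v (some (some c))) ds false rest
  | f, ds, true, BMove.blank v r :: rest =>
      ¬ MEnded G K f ds ∧ f v = none ∧ InMarked ds v ∧ r = none ∧
        LegalSeqM G K (update f v (some none)) ds false rest
  | f, ds, false, BMove.color v c :: rest =>
      ¬ MEnded G K f ds ∧ BColLegal G K f v c ∧
        LegalSeqM G K (update f v (some (some c))) ds true rest
  | f, ds, false, BMove.blank v none :: rest =>
      ¬ MEnded G K f ds ∧ f v = none ∧
        LegalSeqM G K (update f v (some none)) ds true rest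
  | f, ds, false, BMove.blank v (some d) :: rest =>
      ¬ MEnded G K f ds ∧ f v = none ∧ d ∈ ds ∧ v ∉ d ∧
        LegalSeqM G K (update f v (some none)) (ds.erase d) true rest

/-- `χ_gb(G; ds | P)`: the least number of colours for which Maker has a winning
strategy in the vertex colouring game with blanks with the classes `ds` marked for
blanks, conditioned on the game starting with the sequence `P` of moves. -/
noncomputable def chiGbMCond (G : SimpleGraph V) (ds : Finset (Finset V))
    (P : List (BMove V)) : ℕ :=
  sInf {n | ∃ K : Finset ℕ, K.card = n ∧
    LegalSeqM G K (fun _ => none) ds true P ∧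
    MakerWinsM G K (Fintype.card V - P.length) (bRun (fun _ => none, ds) P).1
      (bRun (fun _ => none, ds) P).2 (decide (P.length % 2 = 0))}

/-! ### The marking game. -/

/-- `v` may legally be marked: it is unmarked and has at most `k - 1` marked
neighbours. -/
def MarkLegal (G : SimpleGraph V) (k : ℕ) (M : Set V) (v : V) : Prop :=
  v ∉ M ∧ (M ∩ {u | G.Adj v u}).ncard < k

/-- Maker wins the marking game from the given position. -/
def MakerWinsMark (G : SimpleGraph V) (k : ℕ) : ℕ → Set V → Bool → Prop
  | 0, M, _ => ∀ v, v ∈ M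
  | fuel + 1, M, true => (∀ v, v ∈ M) ∨
      ∃ v, MarkLegal G k M v ∧ MakerWinsMark G k fuel (insert v M) false
  | fuel + 1, M, false => (∀ v, v ∈ M) ∨
      ((∃ v, MarkLegal G k M v) ∧
        ∀ v, MarkLegal G k M v → MakerWinsMark G k fuel (insert v M) true)

/-- The marking number (game colouring number) `m(G)`: the least `k` for which Maker
has a winning strategy in the marking game. -/
noncomputable def markingNumber (G : SimpleGraph V) : ℕ :=
  sInf {k | MakerWinsMark G k (Fintype.card V) ∅ true}


/-!
With at least three colours Maker wins on every spanning subgraph of `K_{2,r}`: she colours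
one vertex of the part of size two at once and, if Breaker has not played the other one,
colours it on her second move, avoiding the one colour Breaker may have placed next to it.
From then on every unplayed vertex has degree at most two, so it always has a legal colour
and the game cannot end before every vertex is played. Finally `⌊(2+r)/2⌋ ≥ 3` as `r ≥ 4`.
-/

open Sum

def unplayed (f : V → Option (Option ℕ)) : Finset V :=
  Finset.univ.filter fun v => f v = none

theorem unplayed_update {f : V → Option (Option ℕ)} {v : V} {y : Option (Option ℕ)}
    (hv : f v = none) (hy : y ≠ none) :
    unplayed (update f v y) = (unplayed f).erase v := by
  ext u
  by_cases h : u = v <;> simp [unplayed, update_apply, h, hy, hv]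

theorem card_unplayed_update {f : V → Option (Option ℕ)} {v : V} {y : Option (Option ℕ)}
    (hv : f v = none) (hy : y ≠ none) :
    (unplayed (update f v y)).card = (unplayed f).card - 1 := by
  rw [unplayed_update hv hy, Finset.card_erase_of_mem (by simp [unplayed, hv])]

section Game

variable (G : SimpleGraph V) [DecidableRel G.Adj] (K : Finset ℕ)

def playedNeighborFinset (f : V → Option (Option ℕ)) (v : V) : Finset V :=
  (G.neighborFinset v).filter fun u => f u ≠ none

omit [DecidableEq V] in
theorem exists_bColLegal_of_card_playedNeighborFinset_lt {f : V → Option (Option ℕ)} {v : V}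
    (hv : f v = none) (hlt : (playedNeighborFinset G f v).card < K.card) :
    ∃ c, BColLegal G K f v c := by
  have hcard : ((playedNeighborFinset G f v).image f).card < (K.image (some ∘ some)).card := by
    rw [Finset.card_image_of_injective _ (Option.some_injective _ |>.comp
      (Option.some_injective _))]
    exact Finset.card_image_le.trans_lt hlt
  obtain ⟨x, hxK, hxN⟩ := Finset.exists_mem_notMem_of_card_lt_card hcard
  obtain ⟨c, hc, rfl⟩ := Finset.mem_image.mp hxK
  refine ⟨c, hc, hv, fun u hu hfu => hxN (Finset.mem_image.mpr ⟨u, ?_, hfu⟩)⟩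
  simp [playedNeighborFinset, hu, hfu]

omit [DecidableEq V] in
theorem card_playedNeighborFinset_le_one {f : V → Option (Option ℕ)} {w v : V}
    (hf : ∀ u, G.Adj w u → u ≠ v → f u = none) : (playedNeighborFinset G f w).card ≤ 1 :=
  Finset.card_le_one.mpr fun a ha b hb => by
    simp only [playedNeighborFinset, Finset.mem_filter, SimpleGraph.mem_neighborFinset] at ha hb
    exact (not_imp_comm.mp (hf a ha.1) ha.2).trans (not_imp_comm.mp (hf b hb.1) hb.2).symm

omit [Fintype V] [DecidableRel G.Adj] in
theorem makerWinsB_breaker_turn {fuel : ℕ} {f : V → Option (Option ℕ)}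
    (hmove : ∃ v c, BColLegal G K f v c)
    (hwin : ∀ v y, f v = none → y ≠ none → MakerWinsB G K fuel (update f v y) true) :
    MakerWinsB G K (fuel + 1) f false :=
  Or.inr ⟨hmove, fun v _ h => hwin v _ h.2.1 (by simp), fun v h => hwin v _ h (by simp)⟩

theorem makerWinsB_of_degree_lt {fuel : ℕ} {f : V → Option (Option ℕ)} (b : Bool)
    (hfuel : (unplayed f).card ≤ fuel) (hdeg : ∀ v ∈ unplayed f, G.degree v < K.card) :
    MakerWinsB G K fuel f b := by
  induction fuel generalizing f b with
  | zero =>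
    intro v hv
    simp_all [unplayed, Finset.filter_eq_empty_iff]
  | succ n ih =>
    by_cases hall : AllPlayed f
    · cases b
      · exact Or.inl ⟨fun ⟨v, _, h⟩ => hall v h.2.1, hall⟩
      · exact Or.inl hall
    obtain ⟨v, hv⟩ : ∃ v, f v = none := by simpa [AllPlayed] using hall
    obtain ⟨c, hc⟩ := exists_bColLegal_of_card_playedNeighborFinset_lt G K hv <|
      (Finset.card_filter_le _ _).trans_lt (hdeg v (by simp [unplayed, hv]))
    have hnext : ∀ v y b, f v = none → y ≠ none → MakerWinsB G K n (update f v y) b :=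
      fun v y b hv hy => ih b (by rw [card_unplayed_update hv hy]; omega) fun u hu =>
        hdeg u (Finset.mem_of_mem_erase (unplayed_update hv hy ▸ hu))
    cases b
    · exact makerWinsB_breaker_turn G K ⟨v, c, hc⟩ fun v y hv hy => hnext v y true hv hy
    · exact Or.inr ⟨v, c, hc, hnext v _ false hv (by simp)⟩

end Game

section CompleteBipartite

variable {α β : Type*} {H : SimpleGraph (α ⊕ β)}

theorem not_adj_inl_inl (hle : H ≤ completeBipartiteGraph α β) (a a' : α) :
    ¬ H.Adj (inl a) (inl a') := fun h => by
  simpa [completeBipartiteGraph] using hle h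

theorem degree_inr_le_card [Fintype α] [Fintype β] [DecidableRel H.Adj]
    (hle : H ≤ completeBipartiteGraph α β) (b : β) :
    H.degree (inr b) ≤ Fintype.card α := by
  rw [← Finset.card_univ, ← Finset.card_map Embedding.inl,
    ← SimpleGraph.card_neighborFinset_eq_degree]
  refine Finset.card_le_card fun u hu => ?_
  rcases u with a | b'
  · simp
  · simpa [completeBipartiteGraph] using hle ((H.mem_neighborFinset _ _).mp hu)

end CompleteBipartite

theorem makerWinsB_of_inl_zero_played {r : ℕ} {G : SimpleGraph (Fin 2 ⊕ Fin r)}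
    [DecidableRel G.Adj] (hle : G ≤ completeBipartiteGraph (Fin 2) (Fin r)) {K : Finset ℕ}
    (hK : 3 ≤ K.card) {fuel : ℕ} {f : Fin 2 ⊕ Fin r → Option (Option ℕ)}
    (h0 : f (inl 0) ≠ none) (h1 : (playedNeighborFinset G f (inl 1)).card < K.card)
    (hfuel : (unplayed f).card ≤ fuel) : MakerWinsB G K fuel f true := by
  have hdeg : ∀ g : Fin 2 ⊕ Fin r → Option (Option ℕ),
      g (inl 0) ≠ none → g (inl 1) ≠ none → ∀ v ∈ unplayed g, G.degree v < K.card := by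
    rintro g h0 h1 (j | i) hv
    · simp only [unplayed, Finset.mem_filter, Finset.mem_univ, true_and] at hv
      fin_cases j <;> contradiction
    · have := degree_inr_le_card hle i
      simp only [Fintype.card_fin] at this
      omega
  by_cases h1' : f (inl 1) = none
  · obtain ⟨c, hc⟩ := exists_bColLegal_of_card_playedNeighborFinset_lt G K h1' h1
    have hpos : 0 < (unplayed f).card := Finset.card_pos.mpr ⟨inl 1, by simp [unplayed, h1']⟩
    obtain ⟨n, rfl⟩ : ∃ n, fuel = n + 1 := ⟨fuel - 1, by omega⟩
    have hne : update f (inl 1) (some (some c)) (inl 1) ≠ none := by simp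
    refine Or.inr ⟨inl 1, c, hc, makerWinsB_of_degree_lt G K _ ?_ (hdeg _ ?_ hne)⟩
    · rw [card_unplayed_update h1' (by simp)]
      omega
    · rwa [update_of_ne (by simp)]
  · exact makerWinsB_of_degree_lt G K _ hfuel (hdeg f h0 h1')

/-- For `r ≥ 4`, any spanning subgraph `G` of the complete bipartite
graph `K_{2,r}` satisfies `χ_gb(G) ≤ ⌊(2+r)/2⌋ = 2 + ⌊(2+r)/2⌋ − 2`. -/
theorem chiGb_le_of_subgraph_completeBipartite (r : ℕ) (hr : 4 ≤ r)
    (G : SimpleGraph (Fin 2 ⊕ Fin r))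
    (hle : G ≤ completeBipartiteGraph (Fin 2) (Fin r)) :
    chiGb G ≤ (2 + r) / 2 := by
  classical
  set K := Finset.range ((2 + r) / 2)
  have hK : 3 ≤ K.card := by simp only [K, Finset.card_range]; omega
  refine Nat.sInf_le (show MakerWinsB G K _ (fun _ => none) true from ?_)
  rw [show Fintype.card (Fin 2 ⊕ Fin r) = r + 1 + 1 by simp; omega]
  set f₁ : Fin 2 ⊕ Fin r → Option (Option ℕ) :=
    update (fun _ => none) (inl 0) (some (some 0))
  have hf₁ : ∀ u, G.Adj (inl 1) u → f₁ u = none := fun u hu =>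
    update_of_ne (by rintro rfl; exact not_adj_inl_inl hle 1 0 hu) _ _
  have hcard₁ : (unplayed f₁).card = r + 1 := by
    rw [card_unplayed_update rfl (by simp)]
    simp [unplayed, add_comm]
  refine Or.inr ⟨inl 0, 0, ⟨Finset.mem_range.mpr (by omega), rfl, by simp⟩,
    makerWinsB_breaker_turn G K ?_ fun v y hv hy => makerWinsB_of_inl_zero_played hle hK ?_ ?_ ?_⟩
  · refine ⟨inl 1, exists_bColLegal_of_card_playedNeighborFinset_lt G K (by simp) ?_⟩
    exact (card_playedNeighborFinset_le_one G (v := inl 0) fun u hu _ => hf₁ u hu).trans_lt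
      (by omega)
  · rw [update_of_ne (by rintro rfl; simp at hv)]
    simp
  · refine (card_playedNeighborFinset_le_one G (v := v) fun u hu huv => ?_).trans_lt (by omega)
    rw [update_of_ne huv]
    exact hf₁ u hu
  · rw [card_unplayed_update hv hy, hcard₁]
    omega

end GameCol
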